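/- Let p be an odd prime. The Markoff move m₁(x,y,z) = (yz − x, y, z) preserves X*_{-2}(F_p), commutes with the Klein four-group N of even sign changes, and hence induces a permutation of the finite set Y_{-2}(F_p) of N-orbits on X*_{-2}(F_p). This induced permutation is even (has sign +1) if and only if p ≡ 3 (mod 8). -/

import Mathlib

/-- The even sign change `n₁(x,y,z) = (x,−y,−z)`. -/
def signChange1 (p : ℕ) (v : ZMod p × ZMod p × ZMod p) : ZMod p × ZMod p × ZMod p :=
  (v.1, -v.2.1, -v.2.2)

/-- The even sign change `n₂(x,y,z) = (−x,y,−z)`. -/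
def signChange2 (p : ℕ) (v : ZMod p × ZMod p × ZMod p) : ZMod p × ZMod p × ZMod p :=
  (-v.1, v.2.1, -v.2.2)

/-- The even sign change `n₃(x,y,z) = (−x,−y,z)`. -/
def signChange3 (p : ℕ) (v : ZMod p × ZMod p × ZMod p) : ZMod p × ZMod p × ZMod p :=
  (-v.1, -v.2.1, v.2.2)

/-- The punctured Markoff surface `X*_{-2}(F_p)`. -/
abbrev MarkoffStar (p : ℕ) : Type :=
  {v : ZMod p × ZMod p × ZMod p //
    v.1 ^ 2 + v.2.1 ^ 2 + v.2.2 ^ 2 = v.1 * v.2.1 * v.2.2 ∧ v ≠ (0, 0, 0)}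

/-- The relation on `X*_{-2}(F_p)` of lying in the same orbit of the Klein four-group
`N = {1, n₁, n₂, n₃}` of even sign changes. -/
def kleinRel (p : ℕ) (a b : MarkoffStar p) : Prop :=
  b.val = a.val ∨ b.val = signChange1 p a.val ∨ b.val = signChange2 p a.val ∨
    b.val = signChange3 p a.val

/-- `Y_{-2}(F_p)`: the set of `N`-orbits on `X*_{-2}(F_p)`. -/
abbrev YMinusTwo (p : ℕ) : Type := Quot (kleinRel p)

noncomputable instance (p : ℕ) [Fact p.Prime] : Fintype (YMinusTwo p) :=
  Fintype.ofFinite _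

noncomputable instance (p : ℕ) : DecidableEq (YMinusTwo p) := Classical.decEq _

/-- `σ` is the permutation of `Y_{-2}(F_p)` induced by a map `f` of `F_p³` which
preserves `X*_{-2}(F_p)` and commutes with the Klein four-group `N`. -/
def Induces (p : ℕ) (f : ZMod p × ZMod p × ZMod p → ZMod p × ZMod p × ZMod p)
    (σ : Equiv.Perm (YMinusTwo p)) : Prop :=
  ∀ v w : MarkoffStar p, w.val = f v.val →
    σ (Quot.mk (kleinRel p) v) = Quot.mk (kleinRel p) w

/-- The Markoff move `m₁(x,y,z) = (yz − x, y, z)`. -/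
def markoffMove1 (p : ℕ) (v : ZMod p × ZMod p × ZMod p) : ZMod p × ZMod p × ZMod p :=
  (v.2.1 * v.2.2 - v.1, v.2.1, v.2.2)

namespace MarkoffAux

open Finset


variable {p : ℕ} [Fact p.Prime]

local notation "χ" => quadraticChar (ZMod p)

lemma hRC (hp : p ≠ 2) : ringChar (ZMod p) ≠ 2 := by
  rw [ZMod.ringChar_zmod_n]; exact hp

lemma two_ne (hp : p ≠ 2) : (2 : ZMod p) ≠ 0 := by
  intro h
  have h2 : ((2 : ℕ) : ZMod p) = 0 := by exact_mod_cast h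
  rw [ZMod.natCast_eq_zero_iff] at h2
  exact hp ((Nat.prime_dvd_prime_iff_eq (Fact.out) Nat.prime_two).mp h2)

lemma four_ne (hp : p ≠ 2) : (4 : ZMod p) ≠ 0 := by
  have : (4 : ZMod p) = 2 * 2 := by norm_num
  rw [this]
  exact mul_ne_zero (two_ne hp) (two_ne hp)

lemma card_sqrts (hp : p ≠ 2) (a : ZMod p) :
    (((univ : Finset (ZMod p)).filter (fun x => x ^ 2 = a)).card : ℤ) = χ a + 1 := by
  have := quadraticChar_card_sqrts (hRC hp) a
  rwa [Set.toFinset_setOf] at this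

lemma chi_inv (c : ZMod p) (hc : c ≠ 0) : χ c⁻¹ = χ c := by
  have h1 : χ c * χ c⁻¹ = 1 := by
    rw [← map_mul, mul_inv_cancel₀ hc, map_one]
  have h2 : χ c * χ c = 1 := by
    have := quadraticChar_sq_one (F := ZMod p) hc
    rwa [sq] at this
  have hcne : χ c ≠ 0 := fun h => hc (quadraticChar_eq_zero_iff.mp h)
  exact mul_left_cancel₀ hcne (h1.trans h2.symm)

/-- `∑ x, χ (x * (x + u)) = -1` for `u ≠ 0`. -/
lemma sum_chi_shift (hp : p ≠ 2) {u : ZMod p} (hu : u ≠ 0) :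
    ∑ x : ZMod p, χ (x * (x + u)) = -1 := by
  have key : ∑ x ∈ (univ : Finset (ZMod p)).erase 0, χ (x * (x + u))
      = ∑ y ∈ (univ : Finset (ZMod p)).erase 1, χ y := by
    refine Finset.sum_nbij' (fun x => 1 + u * x⁻¹) (fun y => u * (y - 1)⁻¹) ?_ ?_ ?_ ?_ ?_
    · intro x hx
      have hx0 : x ≠ 0 := by simpa using (Finset.mem_erase.mp hx).1
      simp only [Finset.mem_erase, Finset.mem_univ, and_true]
      intro h
      have : u * x⁻¹ = 0 := by linear_combination h
      rcases mul_eq_zero.mp this with h' | h'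
      · exact hu h'
      · exact hx0 (inv_eq_zero.mp h')
    · intro y hy
      have hy1 : y ≠ 1 := by simpa using (Finset.mem_erase.mp hy).1
      simp only [Finset.mem_erase, Finset.mem_univ, and_true]
      exact mul_ne_zero hu (inv_ne_zero (sub_ne_zero.mpr hy1))
    · intro x hx
      have hx0 : x ≠ 0 := by simpa using (Finset.mem_erase.mp hx).1
      field_simp
      rw [add_sub_cancel_left, div_self hu]
    · intro y hy
      have hy1 : y ≠ 1 := by simpa using (Finset.mem_erase.mp hy).1
      have h1 : y - 1 ≠ 0 := sub_ne_zero.mpr hy1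
      field_simp
      ring
    · intro x hx
      have hx0 : x ≠ 0 := by simpa using (Finset.mem_erase.mp hx).1
      have : x * (x + u) = x ^ 2 * (1 + u * x⁻¹) := by field_simp
      rw [this, map_mul, quadraticChar_sq_one' hx0, one_mul]
  have h0 : χ ((0 : ZMod p) * (0 + u)) = 0 := by simp
  have hful : ∑ x : ZMod p, χ (x * (x + u))
      = ∑ x ∈ (univ : Finset (ZMod p)).erase 0, χ (x * (x + u)) := by
    rw [← Finset.sum_erase_add _ _ (Finset.mem_univ (0 : ZMod p)), h0, add_zero]
  have hful2 : ∑ y ∈ (univ : Finset (ZMod p)).erase 1, χ y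
      = (∑ y : ZMod p, χ y) - χ 1 := by
    rw [← Finset.sum_erase_add _ _ (Finset.mem_univ (1 : ZMod p))]
    ring
  rw [hful, key, hful2, quadraticChar_sum_zero (hRC hp), map_one]
  ring

/-- transform a sum over squares. -/
lemma sum_sq_transform (hp : p ≠ 2) (g : ZMod p → ℤ) :
    ∑ y : ZMod p, g (y ^ 2) = ∑ a : ZMod p, (χ a + 1) * g a := by
  rw [← Finset.sum_fiberwise univ (fun y : ZMod p => y ^ 2) (fun y => g (y ^ 2))]
  refine Finset.sum_congr rfl fun a _ => ?_
  have h1 : ∑ y ∈ univ.filter (fun y : ZMod p => y ^ 2 = a), g (y ^ 2)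
      = ∑ y ∈ univ.filter (fun y : ZMod p => y ^ 2 = a), g a := by
    refine Finset.sum_congr rfl fun y hy => ?_
    rw [(Finset.mem_filter.mp hy).2]
  rw [h1, Finset.sum_const, nsmul_eq_mul, ← card_sqrts hp a]

/-- linear shift sum is zero -/
lemma sum_chi_linear (hp : p ≠ 2) {c : ZMod p} (hc : c ≠ 0) (d : ZMod p) :
    ∑ a : ZMod p, χ (c * a + d) = 0 := by
  have : ∑ a : ZMod p, χ (c * a + d) = ∑ b : ZMod p, χ b := by
    refine Finset.sum_nbij' (fun a => c * a + d) (fun b => c⁻¹ * (b - d))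
      (fun _ _ => Finset.mem_univ _) (fun _ _ => Finset.mem_univ _) ?_ ?_ (fun _ _ => rfl)
    · intro a _; field_simp; ring
    · intro b _; field_simp; ring
  rw [this, quadraticChar_sum_zero (hRC hp)]

lemma sum_chi_quadratic (hp : p ≠ 2) {c d : ZMod p} (hc : c ≠ 0) (hd : d ≠ 0) :
    ∑ z : ZMod p, χ (c * z ^ 2 + d) = -χ c := by
  have := sum_sq_transform hp (fun a => χ (c * a + d))
  rw [this]
  have expand : ∀ a : ZMod p, (χ a + 1) * χ (c * a + d)
      = χ c * χ (a * (a + d * c⁻¹)) + χ (c * a + d) := by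
    intro a
    have hci : c * c⁻¹ = 1 := mul_inv_cancel₀ hc
    have harg : c * (a * (a + d * c⁻¹)) = a * (c * a + d) := by
      linear_combination a * d * hci
    have : χ a * χ (c * a + d) = χ c * χ (a * (a + d * c⁻¹)) := by
      rw [← map_mul, ← map_mul, harg, map_mul]
    linear_combination this
  rw [Finset.sum_congr rfl (fun a _ => expand a), Finset.sum_add_distrib,
    ← Finset.mul_sum, sum_chi_shift hp (by exact mul_ne_zero hd (inv_ne_zero hc)),
    sum_chi_linear hp hc d]
  ring


lemma sixteen_ne (hp : p ≠ 2) : (16 : ZMod p) ≠ 0 := by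
  have : (16 : ZMod p) = 4 * 4 := by norm_num
  rw [this]; exact mul_ne_zero (four_ne hp) (four_ne hp)

lemma sq_eq_four_iff (hp : p ≠ 2) (y : ZMod p) : y ^ 2 = 4 ↔ y = 2 ∨ y = -2 := by
  constructor
  · intro h
    have : (y - 2) * (y + 2) = 0 := by linear_combination h
    rcases mul_eq_zero.mp this with h' | h'
    · left; linear_combination h'
    · right; linear_combination h'
  · rintro (rfl | rfl) <;> norm_num

lemma two_ne_neg_two (hp : p ≠ 2) : (2 : ZMod p) ≠ -2 := by
  intro h
  apply four_ne hp
  linear_combination h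

lemma filter_triple (hp : p ≠ 2) :
    (univ : Finset (ZMod p)).filter (fun y => y = 0 ∨ y ^ 2 = 4) = {0, 2, -2} := by
  ext y
  simp only [mem_filter, mem_univ, true_and, mem_insert, mem_singleton,
    sq_eq_four_iff hp]

lemma card_triple (hp : p ≠ 2) :
    ((univ : Finset (ZMod p)).filter (fun y => y = 0 ∨ y ^ 2 = 4)).card = 3 := by
  rw [filter_triple hp]
  rw [Finset.card_insert_of_notMem (by
    simp only [mem_insert, mem_singleton]
    push_neg
    exact ⟨fun h => two_ne hp h.symm, fun h => neg_ne_zero.mpr (two_ne hp) h.symm⟩),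
    Finset.card_insert_of_notMem (by
      simp only [mem_singleton]
      exact two_ne_neg_two hp), Finset.card_singleton]

lemma chi_neg_sixteen (hp : p ≠ 2) : χ (-16 : ZMod p) = χ (-1) := by
  have : (-16 : ZMod p) = -1 * 4 ^ 2 := by norm_num
  rw [this, map_mul, quadraticChar_sq_one' (four_ne hp), mul_one]

lemma chi_neg_four (hp : p ≠ 2) : χ (-4 : ZMod p) = χ (-1) := by
  have : (-4 : ZMod p) = -1 * 2 ^ 2 := by norm_num
  rw [this, map_mul, quadraticChar_sq_one' (two_ne hp), mul_one]

lemma sum_chi_sq_sub_four (hp : p ≠ 2) :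
    ∑ y : ZMod p, χ (y ^ 2 - 4) = -1 := by
  have := sum_sq_transform hp (fun a => χ (a - 4))
  rw [this]
  have expand : ∀ a : ZMod p, (χ a + 1) * χ (a - 4)
      = χ (a * (a + (-4))) + χ (1 * a + (-4)) := by
    intro a
    have h1 : a * (a + (-4)) = a * (a - 4) := by ring
    have h2 : (1 : ZMod p) * a + (-4) = a - 4 := by ring
    rw [h1, h2, map_mul]
    ring
  rw [Finset.sum_congr rfl (fun a _ => expand a), Finset.sum_add_distrib,
    sum_chi_shift hp (neg_ne_zero.mpr (four_ne hp)), sum_chi_linear hp one_ne_zero]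
  ring

lemma card_ZMod : (Fintype.card (ZMod p)) = p := ZMod.card p

lemma inner_eval (hp : p ≠ 2) (y : ZMod p) :
    ∑ z : ZMod p, χ ((y ^ 2 - 4) * z ^ 2 - 4 * y ^ 2)
      = -χ (y ^ 2 - 4) + (if y = 0 ∨ y ^ 2 = 4 then (p : ℤ) * χ (-1) else 0) := by
  by_cases hy4 : y ^ 2 = 4
  · have hcongr : ∑ z : ZMod p, χ ((y ^ 2 - 4) * z ^ 2 - 4 * y ^ 2)
        = ∑ _z : ZMod p, χ (-16 : ZMod p) :=
      Finset.sum_congr rfl (fun z _ => by rw [hy4]; norm_num)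
    have h0 : y ^ 2 - 4 = 0 := by rw [hy4]; ring
    rw [hcongr, Finset.sum_const, Finset.card_univ, card_ZMod, chi_neg_sixteen hp,
      if_pos (Or.inr hy4), h0, quadraticChar_zero]
    simp [nsmul_eq_mul]
  · by_cases hy0 : y = 0
    · subst hy0
      have hcongr : ∑ z : ZMod p, χ (((0 : ZMod p) ^ 2 - 4) * z ^ 2 - 4 * 0 ^ 2)
          = ∑ z : ZMod p, χ (-4 * z ^ 2) :=
        Finset.sum_congr rfl (fun z _ => by ring_nf)
      have hsum : ∑ z : ZMod p, χ (-4 * z ^ 2)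
          = ∑ z ∈ (univ : Finset (ZMod p)).erase 0, χ (-4 * z ^ 2) := by
        rw [← Finset.sum_erase_add _ _ (Finset.mem_univ (0 : ZMod p))]
        simp
      have hterm : ∑ z ∈ (univ : Finset (ZMod p)).erase 0, χ (-4 * z ^ 2)
          = ∑ _z ∈ (univ : Finset (ZMod p)).erase 0, χ (-1 : ZMod p) := by
        refine Finset.sum_congr rfl (fun z hz => ?_)
        have hz0 : z ≠ 0 := by simpa using (Finset.mem_erase.mp hz).1
        have : (-4 : ZMod p) * z ^ 2 = -1 * (2 * z) ^ 2 := by ring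
        rw [this, map_mul, quadraticChar_sq_one' (mul_ne_zero (two_ne hp) hz0), mul_one]
      have h04 : (0 : ZMod p) ^ 2 - 4 = -4 := by ring
      have hp1 : 1 ≤ p := (Fact.out : p.Prime).one_lt.le
      rw [hcongr, hsum, hterm, Finset.sum_const,
        Finset.card_erase_of_mem (Finset.mem_univ _), Finset.card_univ, card_ZMod,
        h04, chi_neg_four hp, if_pos (Or.inl rfl), nsmul_eq_mul]
      push_cast [Nat.cast_sub hp1]
      ring
    · have hc : y ^ 2 - 4 ≠ 0 := fun h => hy4 (by linear_combination h)
      have hd : -(4 * y ^ 2) ≠ 0 := by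
        apply neg_ne_zero.mpr
        exact mul_ne_zero (four_ne hp) (pow_ne_zero 2 hy0)
      have hcongr : ∑ z : ZMod p, χ ((y ^ 2 - 4) * z ^ 2 - 4 * y ^ 2)
          = ∑ z : ZMod p, χ ((y ^ 2 - 4) * z ^ 2 + -(4 * y ^ 2)) :=
        Finset.sum_congr rfl (fun z _ => by ring_nf)
      rw [hcongr, sum_chi_quadratic hp hc hd]
      simp [hy0, hy4]


/-- discriminant -/
def D (p : ℕ) (w : ZMod p × ZMod p) : ZMod p :=
  (w.1 * w.2) ^ 2 - 4 * (w.1 ^ 2 + w.2 ^ 2)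

lemma sum_S (hp : p ≠ 2) :
    ∑ w : ZMod p × ZMod p, χ (D p w) = 3 * p * χ (-1) + 1 := by
  rw [Fintype.sum_prod_type]
  have hcongr : ∀ y : ZMod p, ∑ z : ZMod p, χ (D p (y, z))
      = ∑ z : ZMod p, χ ((y ^ 2 - 4) * z ^ 2 - 4 * y ^ 2) := by
    intro y
    refine Finset.sum_congr rfl (fun z _ => ?_)
    congr 1
    simp only [D]
    ring
  rw [Finset.sum_congr rfl (fun y _ => (hcongr y).trans (inner_eval hp y)),
    Finset.sum_add_distrib]
  rw [← Finset.sum_filter, Finset.sum_const, card_triple hp, Finset.sum_neg_distrib,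
    sum_chi_sq_sub_four hp]
  push_cast
  ring

/-- the Markoff equation as a square condition -/
lemma eq_iff_sq (hp : p ≠ 2) (x y z : ZMod p) :
    x ^ 2 + y ^ 2 + z ^ 2 = x * y * z ↔ (2 * x - y * z) ^ 2 = D p (y, z) := by
  constructor
  · intro h
    simp only [D]
    linear_combination 4 * h
  · intro h
    have h4 : (4 : ZMod p) * (x ^ 2 + y ^ 2 + z ^ 2) = 4 * (x * y * z) := by
      simp only [D] at h
      linear_combination h
    exact mul_left_cancel₀ (four_ne hp) h4

/-- cardinality of the full Markoff surface (with origin) -/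
lemma cardX (hp : p ≠ 2) :
    (((univ : Finset (ZMod p × ZMod p × ZMod p)).filter
        (fun v => v.1 ^ 2 + v.2.1 ^ 2 + v.2.2 ^ 2 = v.1 * v.2.1 * v.2.2)).card : ℤ)
      = p ^ 2 + 3 * p * χ (-1) + 1 := by
  have h2i : (2 : ZMod p) * 2⁻¹ = 1 := mul_inv_cancel₀ (two_ne hp)
  set X := (univ : Finset (ZMod p × ZMod p × ZMod p)).filter
      (fun v => v.1 ^ 2 + v.2.1 ^ 2 + v.2.2 ^ 2 = v.1 * v.2.1 * v.2.2) with hX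
  have hfib : ∀ w : ZMod p × ZMod p,
      ((X.filter (fun v => v.2 = w)).card : ℤ) = χ (D p w) + 1 := by
    intro w
    have hcardeq : (X.filter (fun v => v.2 = w)).card
        = ((univ : Finset (ZMod p)).filter (fun x => x ^ 2 = D p w)).card := by
      refine Finset.card_nbij' (fun v => 2 * v.1 - w.1 * w.2)
        (fun x => (2⁻¹ * (x + w.1 * w.2), w.1, w.2)) ?_ ?_ ?_ ?_
      · intro v hv
        simp only [Finset.mem_coe, hX, Finset.mem_filter, Finset.mem_univ, true_and] at hv ⊢
        obtain ⟨heq, hvw⟩ := hv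
        subst hvw
        exact (eq_iff_sq hp v.1 v.2.1 v.2.2).mp heq
      · intro x hx
        simp only [Finset.mem_coe, Finset.mem_filter, Finset.mem_univ, true_and, hX] at hx ⊢
        refine ⟨?_, trivial⟩
        apply (eq_iff_sq hp _ w.1 w.2).mpr
        have : 2 * (2⁻¹ * (x + w.1 * w.2)) - w.1 * w.2 = x := by
          linear_combination (x + w.1 * w.2) * h2i
        rw [this]
        exact hx
      · intro v hv
        simp only [Finset.mem_coe, hX, Finset.mem_filter, Finset.mem_univ, true_and] at hv
        obtain ⟨heq, hvw⟩ := hv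
        have h1 : 2⁻¹ * (2 * v.1 - w.1 * w.2 + w.1 * w.2) = v.1 := by
          linear_combination v.1 * h2i
        show (2⁻¹ * (2 * v.1 - w.1 * w.2 + w.1 * w.2), w.1, w.2) = v
        rw [h1, ← hvw]
      · intro x hx
        simp only
        linear_combination (x + w.1 * w.2) * h2i
    rw [hcardeq]
    exact card_sqrts hp _
  have hmain : X.card = ∑ w : ZMod p × ZMod p, (X.filter (fun v => v.2 = w)).card :=
    Finset.card_eq_sum_card_fiberwise (fun v _ => Finset.mem_univ v.2)
  have : (X.card : ℤ) = ∑ w : ZMod p × ZMod p, ((X.filter (fun v => v.2 = w)).card : ℤ) := by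
    rw [hmain]; push_cast; rfl
  rw [this, Finset.sum_congr rfl (fun w _ => hfib w), Finset.sum_add_distrib, sum_S hp,
    Finset.sum_const, Finset.card_univ]
  have : Fintype.card (ZMod p × ZMod p) = p * p := by
    rw [Fintype.card_prod, card_ZMod]
  rw [this]
  push_cast
  ring

/-- count of points with `(y²-4)(z²-4) = 16` -/
lemma cardW (hp : p ≠ 2) :
    (((univ : Finset (ZMod p × ZMod p)).filter
        (fun w => (w.1 ^ 2 - 4) * (w.2 ^ 2 - 4) = 16)).card : ℤ)
      = p - 3 - χ (-1) := by
  set W := (univ : Finset (ZMod p × ZMod p)).filter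
      (fun w => (w.1 ^ 2 - 4) * (w.2 ^ 2 - 4) = 16) with hW
  have hfib : ∀ y : ZMod p, ((W.filter (fun w => w.1 = y)).card : ℤ)
      = 1 + χ (y ^ 2 - 4) + (if y = 0 then -χ (-1) else if y ^ 2 = 4 then -1 else 0) := by
    intro y
    have hcardeq : (W.filter (fun w => w.1 = y)).card
        = ((univ : Finset (ZMod p)).filter
            (fun z => (y ^ 2 - 4) * z ^ 2 = 4 * y ^ 2)).card := by
      refine Finset.card_nbij' (fun w => w.2) (fun z => (y, z)) ?_ ?_ ?_ ?_
      · intro w hw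
        simp only [Finset.mem_coe, hW, Finset.mem_filter, Finset.mem_univ, true_and] at hw ⊢
        obtain ⟨heq, hwy⟩ := hw
        subst hwy
        linear_combination heq
      · intro z hz
        simp only [Finset.mem_coe, hW, Finset.mem_filter, Finset.mem_univ, true_and] at hz ⊢
        exact ⟨by linear_combination hz, trivial⟩
      · intro w hw
        simp only [Finset.mem_coe, hW, Finset.mem_filter, Finset.mem_univ, true_and] at hw
        obtain ⟨_, hwy⟩ := hw
        rw [← hwy]
      · intro z _
        rfl
    rw [hcardeq]
    by_cases hy0 : y = 0
    · subst hy0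
      have hset : (univ : Finset (ZMod p)).filter
          (fun z => ((0 : ZMod p) ^ 2 - 4) * z ^ 2 = 4 * 0 ^ 2) = {0} := by
        ext z
        simp only [Finset.mem_filter, Finset.mem_univ, true_and, Finset.mem_singleton]
        constructor
        · intro h
          have h4 : (-4 : ZMod p) * z ^ 2 = 0 := by linear_combination h
          rcases mul_eq_zero.mp h4 with h' | h'
          · exact absurd h' (neg_ne_zero.mpr (four_ne hp))
          · exact pow_eq_zero_iff (n := 2) (by norm_num) |>.mp h'
        · rintro rfl; ring
      rw [hset]
      simp only [Finset.card_singleton, if_pos rfl]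
      have h04 : (0 : ZMod p) ^ 2 - 4 = -4 := by ring
      rw [h04, chi_neg_four hp]
      push_cast
      ring
    · by_cases hy4 : y ^ 2 = 4
      · have hset : (univ : Finset (ZMod p)).filter
            (fun z => (y ^ 2 - 4) * z ^ 2 = 4 * y ^ 2) = ∅ := by
          ext z
          simp only [Finset.mem_filter, Finset.mem_univ, true_and, Finset.notMem_empty,
            iff_false]
          intro h
          apply sixteen_ne hp
          have h0 : y ^ 2 - 4 = 0 := by rw [hy4]; ring
          rw [h0, zero_mul] at h
          linear_combination -h - 4 * hy4
        rw [hset]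
        have h0 : y ^ 2 - 4 = 0 := by rw [hy4]; ring
        simp [h0, hy0, hy4, quadraticChar_zero]
      · have hc : y ^ 2 - 4 ≠ 0 := fun h => hy4 (by linear_combination h)
        have hset : (univ : Finset (ZMod p)).filter
            (fun z => (y ^ 2 - 4) * z ^ 2 = 4 * y ^ 2)
            = (univ : Finset (ZMod p)).filter
              (fun z => z ^ 2 = 4 * y ^ 2 * (y ^ 2 - 4)⁻¹) := by
          ext z
          simp only [Finset.mem_filter, Finset.mem_univ, true_and]
          have hci : (y ^ 2 - 4) * (y ^ 2 - 4)⁻¹ = 1 := mul_inv_cancel₀ hc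
          constructor
          · intro h
            linear_combination (y ^ 2 - 4)⁻¹ * h - z ^ 2 * hci
          · intro h
            linear_combination (y ^ 2 - 4) * h + 4 * y ^ 2 * hci
        rw [hset, card_sqrts hp]
        have harg : χ (4 * y ^ 2 * (y ^ 2 - 4)⁻¹) = χ (y ^ 2 - 4) := by
          have h1 : (4 : ZMod p) * y ^ 2 = (2 * y) ^ 2 := by ring
          rw [h1, map_mul, quadraticChar_sq_one' (mul_ne_zero (two_ne hp) hy0),
            one_mul, chi_inv _ hc]
        rw [harg, if_neg hy0, if_neg hy4]
        ring
  have hmain : W.card = ∑ y : ZMod p, (W.filter (fun w => w.1 = y)).card :=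
    Finset.card_eq_sum_card_fiberwise (fun w _ => Finset.mem_univ w.1)
  have hcast : (W.card : ℤ) = ∑ y : ZMod p, ((W.filter (fun w => w.1 = y)).card : ℤ) := by
    rw [hmain]; push_cast; rfl
  rw [hcast, Finset.sum_congr rfl (fun y _ => hfib y), Finset.sum_add_distrib,
    Finset.sum_add_distrib, sum_chi_sq_sub_four hp, Finset.sum_const, Finset.card_univ,
    card_ZMod]
  have hcorr : ∑ y : ZMod p, (if y = 0 then -χ (-1) else if y ^ 2 = 4 then (-1 : ℤ) else 0)
      = -χ (-1) - 2 := by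
    rw [← Finset.sum_subset (Finset.subset_univ ({0, 2, -2} : Finset (ZMod p)))]
    · rw [Finset.sum_insert (by
        simp only [Finset.mem_insert, Finset.mem_singleton]
        push_neg
        exact ⟨fun h => two_ne hp h.symm, fun h => neg_ne_zero.mpr (two_ne hp) h.symm⟩),
        Finset.sum_insert (by simp only [Finset.mem_singleton]; exact two_ne_neg_two hp),
        Finset.sum_singleton]
      rw [if_pos rfl, if_neg (fun h => two_ne hp h), if_neg (neg_ne_zero.mpr (two_ne hp)),
        if_pos (by norm_num), if_pos (by ring)]
      ring
    · intro y _ hy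
      simp only [Finset.mem_insert, Finset.mem_singleton] at hy
      push_neg at hy
      obtain ⟨h0, h2, hn2⟩ := hy
      rw [if_neg h0, if_neg ?_]
      rw [sq_eq_four_iff hp]
      push_neg
      exact ⟨h2, hn2⟩
  rw [hcorr]
  push_cast
  ring

/-- count of points with `x² + z² = 0` -/
lemma cardV (hp : p ≠ 2) :
    (((univ : Finset (ZMod p × ZMod p)).filter
        (fun w => w.1 ^ 2 + w.2 ^ 2 = 0)).card : ℤ)
      = p + (p - 1) * χ (-1) := by
  set V := (univ : Finset (ZMod p × ZMod p)).filter
      (fun w => w.1 ^ 2 + w.2 ^ 2 = 0) with hV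
  have hfib : ∀ x : ZMod p, ((V.filter (fun w => w.1 = x)).card : ℤ)
      = 1 + (if x = 0 then 0 else χ (-1)) := by
    intro x
    have hcardeq : (V.filter (fun w => w.1 = x)).card
        = ((univ : Finset (ZMod p)).filter (fun z => z ^ 2 = -x ^ 2)).card := by
      refine Finset.card_nbij' (fun w => w.2) (fun z => (x, z)) ?_ ?_ ?_ ?_
      · intro w hw
        simp only [Finset.mem_coe, hV, Finset.mem_filter, Finset.mem_univ, true_and] at hw ⊢
        obtain ⟨heq, hwx⟩ := hw
        subst hwx
        linear_combination heq
      · intro z hz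
        simp only [Finset.mem_coe, hV, Finset.mem_filter, Finset.mem_univ, true_and] at hz ⊢
        exact ⟨by linear_combination hz, trivial⟩
      · intro w hw
        simp only [Finset.mem_coe, hV, Finset.mem_filter, Finset.mem_univ, true_and] at hw
        rw [← hw.2]
      · intro z _; rfl
    rw [hcardeq, card_sqrts hp]
    by_cases hx : x = 0
    · subst hx
      simp [quadraticChar_zero]
    · have : (-x ^ 2 : ZMod p) = -1 * x ^ 2 := by ring
      rw [this, map_mul, quadraticChar_sq_one' hx, mul_one, if_neg hx]
      ring
  have hmain : V.card = ∑ x : ZMod p, (V.filter (fun w => w.1 = x)).card :=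
    Finset.card_eq_sum_card_fiberwise (fun w _ => Finset.mem_univ w.1)
  have hcast : (V.card : ℤ) = ∑ x : ZMod p, ((V.filter (fun w => w.1 = x)).card : ℤ) := by
    rw [hmain]; push_cast; rfl
  rw [hcast, Finset.sum_congr rfl (fun x _ => hfib x), Finset.sum_add_distrib,
    Finset.sum_const, Finset.card_univ, card_ZMod]
  have hcorr : ∑ x : ZMod p, (if x = 0 then (0 : ℤ) else χ (-1)) = (p - 1) * χ (-1) := by
    rw [← Finset.sum_erase_add _ _ (Finset.mem_univ (0 : ZMod p)), if_pos rfl, add_zero,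
      Finset.sum_congr rfl (fun x hx => if_neg (by simpa using (Finset.mem_erase.mp hx).1)),
      Finset.sum_const, Finset.card_erase_of_mem (Finset.mem_univ _), Finset.card_univ,
      card_ZMod, nsmul_eq_mul]
    have hp1 : 1 ≤ p := (Fact.out : p.Prime).one_lt.le
    push_cast [Nat.cast_sub hp1]
    ring
  rw [hcorr]
  push_cast
  ring


section OrbitPart

variable {p : ℕ} [Fact p.Prime]

local notation "χ" => quadraticChar (ZMod p)

/-! ### sign change composition -/

lemma sc1_sc1 (v : ZMod p × ZMod p × ZMod p) : signChange1 p (signChange1 p v) = v := by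
  simp [signChange1]

lemma sc1_sc2 (v : ZMod p × ZMod p × ZMod p) :
    signChange1 p (signChange2 p v) = signChange3 p v := by
  simp [signChange1, signChange2, signChange3]

lemma sc1_sc3 (v : ZMod p × ZMod p × ZMod p) :
    signChange1 p (signChange3 p v) = signChange2 p v := by
  simp [signChange1, signChange2, signChange3]

lemma sc2_sc1 (v : ZMod p × ZMod p × ZMod p) :
    signChange2 p (signChange1 p v) = signChange3 p v := by
  simp [signChange1, signChange2, signChange3]

lemma sc2_sc2 (v : ZMod p × ZMod p × ZMod p) : signChange2 p (signChange2 p v) = v := by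
  simp [signChange2]

lemma sc2_sc3 (v : ZMod p × ZMod p × ZMod p) :
    signChange2 p (signChange3 p v) = signChange1 p v := by
  simp [signChange1, signChange2, signChange3]

lemma sc3_sc1 (v : ZMod p × ZMod p × ZMod p) :
    signChange3 p (signChange1 p v) = signChange2 p v := by
  simp [signChange1, signChange2, signChange3]

lemma sc3_sc2 (v : ZMod p × ZMod p × ZMod p) :
    signChange3 p (signChange2 p v) = signChange1 p v := by
  simp [signChange1, signChange2, signChange3]

lemma sc3_sc3 (v : ZMod p × ZMod p × ZMod p) : signChange3 p (signChange3 p v) = v := by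
  simp [signChange3]

lemma kleinRel_equivalence : Equivalence (kleinRel p) := by
  constructor
  · intro a; exact Or.inl rfl
  · intro a b h
    rcases h with h | h | h | h
    · exact Or.inl h.symm
    · exact Or.inr (Or.inl (by rw [h, sc1_sc1]))
    · exact Or.inr (Or.inr (Or.inl (by rw [h, sc2_sc2])))
    · exact Or.inr (Or.inr (Or.inr (by rw [h, sc3_sc3])))
  · intro a b c h1 h2
    unfold kleinRel at h1 h2 ⊢
    rcases h1 with h1 | h1 | h1 | h1 <;> rcases h2 with h2 | h2 | h2 | h2 <;>
      rw [h2, h1] <;>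
      simp [sc1_sc1, sc1_sc2, sc1_sc3, sc2_sc1, sc2_sc2, sc2_sc3, sc3_sc1, sc3_sc2, sc3_sc3]

lemma quot_mk_eq_iff (a b : MarkoffStar p) :
    (Quot.mk (kleinRel p) a = Quot.mk (kleinRel p) b) ↔ kleinRel p a b := by
  rw [Quot.eq]
  exact Equivalence.eqvGen_iff kleinRel_equivalence

/-! ### lifted maps -/

lemma triple_ne_zero {v : ZMod p × ZMod p × ZMod p} (h : v ≠ (0, 0, 0)) :
    ¬(v.1 = 0 ∧ v.2.1 = 0 ∧ v.2.2 = 0) := by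
  intro ⟨h1, h2, h3⟩
  exact h (by rw [Prod.ext_iff, Prod.ext_iff]; exact ⟨h1, h2, h3⟩)

lemma markoff_x_zero (hp : p ≠ 2) {v : ZMod p × ZMod p × ZMod p}
    (heq : v.1 ^ 2 + v.2.1 ^ 2 + v.2.2 ^ 2 = v.1 * v.2.1 * v.2.2)
    (hne : v ≠ (0, 0, 0)) (h2 : v.2.1 = 0) (h3 : v.2.2 = 0) : False := by
  apply triple_ne_zero hne
  refine ⟨?_, h2, h3⟩
  have : v.1 ^ 2 = 0 := by rw [h2, h3] at heq; linear_combination heq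
  exact pow_eq_zero_iff (n := 2) (by norm_num) |>.mp this

lemma markoff_y_zero (hp : p ≠ 2) {v : ZMod p × ZMod p × ZMod p}
    (heq : v.1 ^ 2 + v.2.1 ^ 2 + v.2.2 ^ 2 = v.1 * v.2.1 * v.2.2)
    (hne : v ≠ (0, 0, 0)) (h1 : v.1 = 0) (h3 : v.2.2 = 0) : False := by
  apply triple_ne_zero hne
  refine ⟨h1, ?_, h3⟩
  have : v.2.1 ^ 2 = 0 := by rw [h1, h3] at heq; linear_combination heq
  exact pow_eq_zero_iff (n := 2) (by norm_num) |>.mp this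

lemma markoff_z_zero (hp : p ≠ 2) {v : ZMod p × ZMod p × ZMod p}
    (heq : v.1 ^ 2 + v.2.1 ^ 2 + v.2.2 ^ 2 = v.1 * v.2.1 * v.2.2)
    (hne : v ≠ (0, 0, 0)) (h1 : v.1 = 0) (h2 : v.2.1 = 0) : False := by
  apply triple_ne_zero hne
  refine ⟨h1, h2, ?_⟩
  have : v.2.2 ^ 2 = 0 := by rw [h1, h2] at heq; linear_combination heq
  exact pow_eq_zero_iff (n := 2) (by norm_num) |>.mp this

/-- lifted sign change `n₁` -/
def n1 (v : MarkoffStar p) : MarkoffStar p :=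
  ⟨signChange1 p v.val, by
    obtain ⟨heq, hne⟩ := v.property
    constructor
    · simp only [signChange1]
      linear_combination heq
    · intro h
      apply triple_ne_zero hne
      rw [Prod.ext_iff, Prod.ext_iff] at h
      simp only [signChange1, neg_eq_zero] at h
      exact ⟨h.1, h.2.1, h.2.2⟩⟩

/-- lifted sign change `n₂` -/
def n2 (v : MarkoffStar p) : MarkoffStar p :=
  ⟨signChange2 p v.val, by
    obtain ⟨heq, hne⟩ := v.property
    constructor
    · simp only [signChange2]
      linear_combination heq
    · intro h
      apply triple_ne_zero hne
      rw [Prod.ext_iff, Prod.ext_iff] at h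
      simp only [signChange2, neg_eq_zero] at h
      exact ⟨h.1, h.2.1, h.2.2⟩⟩

/-- lifted sign change `n₃` -/
def n3 (v : MarkoffStar p) : MarkoffStar p :=
  ⟨signChange3 p v.val, by
    obtain ⟨heq, hne⟩ := v.property
    constructor
    · simp only [signChange3]
      linear_combination heq
    · intro h
      apply triple_ne_zero hne
      rw [Prod.ext_iff, Prod.ext_iff] at h
      simp only [signChange3, neg_eq_zero] at h
      exact ⟨h.1, h.2.1, h.2.2⟩⟩

/-- lifted Markoff move -/
def mv (v : MarkoffStar p) : MarkoffStar p :=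
  ⟨markoffMove1 p v.val, by
    obtain ⟨heq, hne⟩ := v.property
    constructor
    · simp only [markoffMove1]
      linear_combination heq
    · intro h
      apply triple_ne_zero hne
      rw [Prod.ext_iff, Prod.ext_iff] at h
      simp only [markoffMove1] at h
      obtain ⟨h1, h2, h3⟩ := h
      refine ⟨?_, h2, h3⟩
      rw [h2, h3] at h1
      linear_combination -h1⟩

lemma m_sc1 (v : ZMod p × ZMod p × ZMod p) :
    markoffMove1 p (signChange1 p v) = signChange1 p (markoffMove1 p v) := by
  rw [Prod.ext_iff, Prod.ext_iff]
  refine ⟨?_, ?_, ?_⟩ <;> simp [markoffMove1, signChange1] <;> ring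

lemma m_sc2 (v : ZMod p × ZMod p × ZMod p) :
    markoffMove1 p (signChange2 p v) = signChange2 p (markoffMove1 p v) := by
  rw [Prod.ext_iff, Prod.ext_iff]
  refine ⟨?_, ?_, ?_⟩ <;> simp [markoffMove1, signChange2] <;> ring

lemma m_sc3 (v : ZMod p × ZMod p × ZMod p) :
    markoffMove1 p (signChange3 p v) = signChange3 p (markoffMove1 p v) := by
  rw [Prod.ext_iff, Prod.ext_iff]
  refine ⟨?_, ?_, ?_⟩ <;> simp [markoffMove1, signChange3] <;> ring

lemma mv_rel {a b : MarkoffStar p} (h : kleinRel p a b) : kleinRel p (mv a) (mv b) := by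
  rcases h with h | h | h | h
  · exact Or.inl (by show markoffMove1 p b.val = _; rw [h]; rfl)
  · exact Or.inr (Or.inl (by show markoffMove1 p b.val = _; rw [h, m_sc1]; rfl))
  · exact Or.inr (Or.inr (Or.inl (by show markoffMove1 p b.val = _; rw [h, m_sc2]; rfl)))
  · exact Or.inr (Or.inr (Or.inr (by show markoffMove1 p b.val = _; rw [h, m_sc3]; rfl)))

lemma mv_invol (v : MarkoffStar p) : mv (mv v) = v := by
  apply Subtype.ext
  show markoffMove1 p (markoffMove1 p v.val) = v.val
  simp [markoffMove1]

/-- the induced permutation on orbits -/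
def sigmaPerm (p : ℕ) [Fact p.Prime] : Equiv.Perm (YMinusTwo p) where
  toFun := Quot.map mv (fun _ _ h => mv_rel h)
  invFun := Quot.map mv (fun _ _ h => mv_rel h)
  left_inv := by
    intro t
    induction t using Quot.ind with
    | mk v => show Quot.mk _ (mv (mv v)) = _; rw [mv_invol]
  right_inv := by
    intro t
    induction t using Quot.ind with
    | mk v => show Quot.mk _ (mv (mv v)) = _; rw [mv_invol]

lemma sigmaPerm_mk (v : MarkoffStar p) :
    sigmaPerm p (Quot.mk (kleinRel p) v) = Quot.mk (kleinRel p) (mv v) := rfl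

lemma sigmaPerm_sq : sigmaPerm p * sigmaPerm p = 1 := by
  apply Equiv.ext
  intro t
  induction t using Quot.ind with
  | mk v =>
    show Quot.mk _ (mv (mv v)) = _
    rw [mv_invol]
    rfl

/-- the fixed-point condition -/
def FixCond (v : MarkoffStar p) : Prop :=
  2 * v.val.1 = v.val.2.1 * v.val.2.2 ∨ v.val.2.1 = 0 ∨ v.val.2.2 = 0

instance (v : MarkoffStar p) : Decidable (FixCond v) := by unfold FixCond; infer_instance

lemma fixCond_invariant {a b : MarkoffStar p} (h : kleinRel p a b) :
    FixCond a ↔ FixCond b := by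
  rcases h with h | h | h | h <;> unfold FixCond <;> rw [h] <;>
    simp [signChange1, signChange2, signChange3, neg_eq_zero, mul_neg, neg_mul, neg_inj]

lemma two_mul_eq_zero (hp : p ≠ 2) {y : ZMod p} (h : (2 : ZMod p) * y = 0) : y = 0 := by
  rcases mul_eq_zero.mp h with h' | h'
  · exact absurd h' (two_ne hp)
  · exact h'

lemma sigma_fix_iff (hp : p ≠ 2) (v : MarkoffStar p) :
    sigmaPerm p (Quot.mk (kleinRel p) v) = Quot.mk (kleinRel p) v ↔ FixCond v := by
  rw [sigmaPerm_mk, quot_mk_eq_iff]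
  show (v.val = (mv v).val ∨ _ ∨ _ ∨ _) ↔ _
  have hmv : (mv v).val = markoffMove1 p v.val := rfl
  constructor
  · rintro (h | h | h | h) <;> rw [hmv] at h <;>
      [skip; rw [← m_sc1] at h; rw [← m_sc2] at h; rw [← m_sc3] at h]
    · left
      have h1 : v.val.1 = (markoffMove1 p v.val).1 := congrArg Prod.fst h
      simp only [markoffMove1] at h1
      linear_combination h1
    · -- v.val = m (sc1 v.val) forces y = 0 and z = 0 (absurd, but then y = 0 suffices)
      right; left
      have h2 : v.val.2.1 = (markoffMove1 p (signChange1 p v.val)).2.1 :=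
        congrArg (fun t => t.2.1) h
      simp only [markoffMove1, signChange1] at h2
      apply two_mul_eq_zero hp
      linear_combination h2
    · right; right
      have h3 : v.val.2.2 = (markoffMove1 p (signChange2 p v.val)).2.2 :=
        congrArg (fun t => t.2.2) h
      simp only [markoffMove1, signChange2] at h3
      apply two_mul_eq_zero hp
      linear_combination h3
    · right; left
      have h2 : v.val.2.1 = (markoffMove1 p (signChange3 p v.val)).2.1 :=
        congrArg (fun t => t.2.1) h
      simp only [markoffMove1, signChange3] at h2
      apply two_mul_eq_zero hp
      linear_combination h2
  · rintro (h | h | h)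
    · left
      rw [hmv]
      refine Prod.ext ?_ rfl
      show v.val.1 = (markoffMove1 p v.val).1
      simp only [markoffMove1]
      linear_combination h
    · right; right; right
      rw [hmv, ← m_sc3]
      refine Prod.ext ?_ (Prod.ext ?_ rfl)
      · show v.val.1 = (markoffMove1 p (signChange3 p v.val)).1
        simp only [markoffMove1, signChange3]
        linear_combination v.val.2.2 * h
      · show v.val.2.1 = (markoffMove1 p (signChange3 p v.val)).2.1
        simp only [markoffMove1, signChange3]
        linear_combination 2 * h
    · right; right; left
      rw [hmv, ← m_sc2]
      refine Prod.ext ?_ (Prod.ext rfl ?_)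
      · show v.val.1 = (markoffMove1 p (signChange2 p v.val)).1
        simp only [markoffMove1, signChange2]
        linear_combination v.val.2.1 * h
      · show v.val.2.2 = (markoffMove1 p (signChange2 p v.val)).2.2
        simp only [markoffMove1, signChange2]
        linear_combination 2 * h

/-! ### orbit counting -/

open Finset

/-- the orbit of `v` as a finset -/
def orbitFinset (v : MarkoffStar p) : Finset (MarkoffStar p) := {v, n1 v, n2 v, n3 v}

lemma fiber_eq (v : MarkoffStar p) :
    (univ : Finset (MarkoffStar p)).filter
        (fun w => Quot.mk (kleinRel p) w = Quot.mk (kleinRel p) v)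
      = orbitFinset v := by
  ext w
  simp only [mem_filter, mem_univ, true_and, orbitFinset, mem_insert, mem_singleton]
  rw [quot_mk_eq_iff]
  show (v.val = w.val ∨ v.val = signChange1 p w.val ∨ v.val = signChange2 p w.val ∨
    v.val = signChange3 p w.val) ↔ _
  constructor
  · rintro (h | h | h | h)
    · exact Or.inl (Subtype.ext h.symm)
    · refine Or.inr (Or.inl (Subtype.ext ?_))
      show w.val = signChange1 p v.val
      rw [h, sc1_sc1]
    · refine Or.inr (Or.inr (Or.inl (Subtype.ext ?_)))
      show w.val = signChange2 p v.val
      rw [h, sc2_sc2]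
    · refine Or.inr (Or.inr (Or.inr (Subtype.ext ?_)))
      show w.val = signChange3 p v.val
      rw [h, sc3_sc3]
  · rintro (h | h | h | h) <;> rw [h]
    · exact Or.inl rfl
    · refine Or.inr (Or.inl ?_)
      show v.val = signChange1 p (signChange1 p v.val)
      rw [sc1_sc1]
    · refine Or.inr (Or.inr (Or.inl ?_))
      show v.val = signChange2 p (signChange2 p v.val)
      rw [sc2_sc2]
    · refine Or.inr (Or.inr (Or.inr ?_))
      show v.val = signChange3 p (signChange3 p v.val)
      rw [sc3_sc3]

lemma orbit_card (hp : p ≠ 2) (v : MarkoffStar p) : (orbitFinset v).card = 4 := by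
  obtain ⟨heq, hne⟩ := v.property
  have hxyz := triple_ne_zero hne
  have hyz : ¬(v.val.2.1 = 0 ∧ v.val.2.2 = 0) := fun ⟨h2, h3⟩ =>
    markoff_x_zero hp heq hne h2 h3
  have hxz : ¬(v.val.1 = 0 ∧ v.val.2.2 = 0) := fun ⟨h1, h3⟩ =>
    markoff_y_zero hp heq hne h1 h3
  have hxy : ¬(v.val.1 = 0 ∧ v.val.2.1 = 0) := fun ⟨h1, h2⟩ =>
    markoff_z_zero hp heq hne h1 h2
  have comp : ∀ a b : MarkoffStar p, a = b ↔
      (a.val.1 = b.val.1 ∧ a.val.2.1 = b.val.2.1 ∧ a.val.2.2 = b.val.2.2) := by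
    intro a b
    rw [Subtype.ext_iff, Prod.ext_iff, Prod.ext_iff]
  have hself : ∀ x : ZMod p, x = -x → x = 0 := by
    intro x hx
    apply two_mul_eq_zero hp
    linear_combination hx
  have h01 : v ≠ n1 v := by
    intro hEq
    obtain ⟨_, h2, h3⟩ := (comp _ _).mp hEq
    exact hyz ⟨hself _ h2, hself _ h3⟩
  have h02 : v ≠ n2 v := by
    intro hEq
    obtain ⟨h1, _, h3⟩ := (comp _ _).mp hEq
    exact hxz ⟨hself _ h1, hself _ h3⟩
  have h03 : v ≠ n3 v := by
    intro hEq
    obtain ⟨h1, h2, _⟩ := (comp _ _).mp hEq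
    exact hxy ⟨hself _ h1, hself _ h2⟩
  have h12 : n1 v ≠ n2 v := by
    intro hEq
    obtain ⟨h1, h2, _⟩ := (comp _ _).mp hEq
    refine hxy ⟨hself _ h1, ?_⟩
    have : -v.val.2.1 = v.val.2.1 := h2
    exact (hself _ this.symm)
  have h13 : n1 v ≠ n3 v := by
    intro hEq
    obtain ⟨h1, _, h3⟩ := (comp _ _).mp hEq
    refine hxz ⟨hself _ h1, ?_⟩
    have : -v.val.2.2 = v.val.2.2 := h3
    exact (hself _ this.symm)
  have h23 : n2 v ≠ n3 v := by
    intro hEq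
    obtain ⟨_, h2, h3⟩ := (comp _ _).mp hEq
    refine hyz ⟨?_, ?_⟩
    · exact hself _ h2
    · have : -v.val.2.2 = v.val.2.2 := h3
      exact (hself _ this.symm)
  unfold orbitFinset
  rw [card_insert_of_notMem (by
      simp only [mem_insert, mem_singleton]
      push_neg
      exact ⟨h01, h02, h03⟩),
    card_insert_of_notMem (by
      simp only [mem_insert, mem_singleton]
      push_neg
      exact ⟨h12, h13⟩),
    card_insert_of_notMem (by simp only [mem_singleton]; exact h23),
    card_singleton]

lemma card_M_eq (hp : p ≠ 2) :
    Fintype.card (MarkoffStar p) = 4 * Fintype.card (YMinusTwo p) := by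
  classical
  have h := Finset.card_eq_sum_card_fiberwise
    (f := fun v : MarkoffStar p => Quot.mk (kleinRel p) v)
    (s := univ) (t := univ) (fun v _ => mem_univ _)
  rw [← Finset.card_univ, h]
  have : ∀ t : YMinusTwo p, t ∈ (univ : Finset (YMinusTwo p)) →
      ((univ : Finset (MarkoffStar p)).filter
        (fun v => Quot.mk (kleinRel p) v = t)).card = 4 := by
    intro t _
    obtain ⟨v, rfl⟩ := Quot.exists_rep t
    rw [fiber_eq, orbit_card hp]
  rw [Finset.sum_congr rfl this, Finset.sum_const, Finset.card_univ, smul_eq_mul, mul_comm]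

lemma card_fixM_eq (hp : p ≠ 2) :
    ((univ : Finset (MarkoffStar p)).filter (fun v => FixCond v)).card
      = 4 * ((univ : Finset (YMinusTwo p)).filter
          (fun t => sigmaPerm p t = t)).card := by
  classical
  have hmaps : ∀ v ∈ (univ : Finset (MarkoffStar p)).filter (fun v => FixCond v),
      Quot.mk (kleinRel p) v ∈ (univ : Finset (YMinusTwo p)).filter
        (fun t => sigmaPerm p t = t) := by
    intro v hv
    simp only [mem_filter, mem_univ, true_and] at hv ⊢
    exact (sigma_fix_iff hp v).mpr hv
  rw [Finset.card_eq_sum_card_fiberwise hmaps]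
  have : ∀ t ∈ (univ : Finset (YMinusTwo p)).filter (fun t => sigmaPerm p t = t),
      (((univ : Finset (MarkoffStar p)).filter (fun v => FixCond v)).filter
        (fun v => Quot.mk (kleinRel p) v = t)).card = 4 := by
    intro t ht
    simp only [mem_filter, mem_univ, true_and] at ht
    obtain ⟨v, rfl⟩ := Quot.exists_rep t
    have hv : FixCond v := (sigma_fix_iff hp v).mp ht
    have hset : ((univ : Finset (MarkoffStar p)).filter (fun v => FixCond v)).filter
        (fun w => Quot.mk (kleinRel p) w = Quot.mk (kleinRel p) v)
        = (univ : Finset (MarkoffStar p)).filter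
          (fun w => Quot.mk (kleinRel p) w = Quot.mk (kleinRel p) v) := by
      ext w
      simp only [mem_filter, mem_univ, true_and, and_iff_right_iff_imp]
      intro hw
      have hrel : kleinRel p w v := (quot_mk_eq_iff w v).mp hw
      exact (fixCond_invariant hrel).mpr hv
    rw [hset, fiber_eq, orbit_card hp]
  rw [Finset.sum_congr rfl this, Finset.sum_const, smul_eq_mul, mul_comm]

end OrbitPart

end MarkoffAux


namespace MarkoffAux

open Finset

variable {p : ℕ} [Fact p.Prime]

local notation "χ" => quadraticChar (ZMod p)

lemma card_M_val (hp : p ≠ 2) :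
    (Fintype.card (MarkoffStar p) : ℤ) = (p : ℤ) ^ 2 + 3 * p * χ (-1) := by
  have hsub : Fintype.card (MarkoffStar p)
      = ((univ : Finset (ZMod p × ZMod p × ZMod p)).filter
          (fun v => v.1 ^ 2 + v.2.1 ^ 2 + v.2.2 ^ 2 = v.1 * v.2.1 * v.2.2 ∧
            v ≠ (0, 0, 0))).card := Fintype.card_subtype _
  have hzero : ((0, 0, 0) : ZMod p × ZMod p × ZMod p) ∈
      (univ : Finset (ZMod p × ZMod p × ZMod p)).filter
        (fun v => v.1 ^ 2 + v.2.1 ^ 2 + v.2.2 ^ 2 = v.1 * v.2.1 * v.2.2) := by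
    simp only [mem_filter, mem_univ, true_and]
    norm_num
  have herase : ((univ : Finset (ZMod p × ZMod p × ZMod p)).filter
      (fun v => v.1 ^ 2 + v.2.1 ^ 2 + v.2.2 ^ 2 = v.1 * v.2.1 * v.2.2 ∧ v ≠ (0, 0, 0)))
      = ((univ : Finset (ZMod p × ZMod p × ZMod p)).filter
          (fun v => v.1 ^ 2 + v.2.1 ^ 2 + v.2.2 ^ 2 = v.1 * v.2.1 * v.2.2)).erase (0, 0, 0) := by
    ext v
    simp only [mem_filter, mem_univ, true_and, mem_erase]
    tauto
  have hle : 1 ≤ ((univ : Finset (ZMod p × ZMod p × ZMod p)).filter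
      (fun v => v.1 ^ 2 + v.2.1 ^ 2 + v.2.2 ^ 2 = v.1 * v.2.1 * v.2.2)).card :=
    Finset.card_pos.mpr ⟨_, hzero⟩
  rw [hsub, herase, Finset.card_erase_of_mem hzero]
  push_cast [Nat.cast_sub hle]
  rw [cardX hp]
  ring

lemma card_fixM_val (hp : p ≠ 2) :
    (((univ : Finset (MarkoffStar p)).filter (fun v => FixCond v)).card : ℤ)
      = ((p : ℤ) - 4 - χ (-1)) + 2 * ((p : ℤ) - 1 + ((p : ℤ) - 1) * χ (-1)) := by
  classical
  have h2i : (2 : ZMod p) * 2⁻¹ = 1 := mul_inv_cancel₀ (two_ne hp)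
  set A0 := (univ : Finset (MarkoffStar p)).filter
      (fun v => 2 * v.val.1 = v.val.2.1 * v.val.2.2) with hA0
  set A1 := (univ : Finset (MarkoffStar p)).filter (fun v => v.val.2.1 = 0) with hA1
  set A2 := (univ : Finset (MarkoffStar p)).filter (fun v => v.val.2.2 = 0) with hA2
  have hunion : (univ : Finset (MarkoffStar p)).filter (fun v => FixCond v)
      = (A0 ∪ A1) ∪ A2 := by
    ext v
    simp only [hA0, hA1, hA2, mem_filter, mem_univ, true_and, mem_union]
    unfold FixCond
    tauto
  -- disjointness
  have hd01 : Disjoint A0 A1 := by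
    rw [Finset.disjoint_left]
    intro v hv hv'
    simp only [hA0, hA1, mem_filter, mem_univ, true_and] at hv hv'
    obtain ⟨heq, hne⟩ := v.property
    have hx : v.val.1 = 0 := by
      apply two_mul_eq_zero hp
      rw [hv, hv']
      ring
    exact markoff_z_zero hp heq hne hx hv'
  have hd02 : Disjoint A0 A2 := by
    rw [Finset.disjoint_left]
    intro v hv hv'
    simp only [hA0, hA2, mem_filter, mem_univ, true_and] at hv hv'
    obtain ⟨heq, hne⟩ := v.property
    have hx : v.val.1 = 0 := by
      apply two_mul_eq_zero hp
      rw [hv, hv']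
      ring
    exact markoff_y_zero hp heq hne hx hv'
  have hd12 : Disjoint A1 A2 := by
    rw [Finset.disjoint_left]
    intro v hv hv'
    simp only [hA1, hA2, mem_filter, mem_univ, true_and] at hv hv'
    obtain ⟨heq, hne⟩ := v.property
    exact markoff_x_zero hp heq hne hv hv'
  have hdU : Disjoint (A0 ∪ A1) A2 := Finset.disjoint_union_left.mpr ⟨hd02, hd12⟩
  -- card of A0
  have hcA0 : (A0.card : ℤ) = (p : ℤ) - 4 - χ (-1) := by
    have hbij : A0.card = ((univ : Finset (ZMod p × ZMod p)).filter
        (fun w => (w.1 ^ 2 - 4) * (w.2 ^ 2 - 4) = 16 ∧ w ≠ (0, 0))).card := by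
      refine Finset.card_bij' (fun v _ => (v.val.2.1, v.val.2.2))
        (fun w hw => ⟨(2⁻¹ * (w.1 * w.2), w.1, w.2), by
          simp only [mem_filter, mem_univ, true_and] at hw
          constructor
          · apply (eq_iff_sq hp _ w.1 w.2).mpr
            have hz : 2 * (2⁻¹ * (w.1 * w.2)) - w.1 * w.2 = 0 := by
              linear_combination (w.1 * w.2) * h2i
            show (2 * (2⁻¹ * (w.1 * w.2)) - w.1 * w.2) ^ 2 = D p (w.1, w.2)
            rw [hz]
            simp only [D]
            linear_combination -hw.1
          · intro hcontra
            apply hw.2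
            rw [Prod.ext_iff, Prod.ext_iff] at hcontra
            rw [Prod.ext_iff]
            exact ⟨hcontra.2.1, hcontra.2.2⟩⟩) ?_ ?_ ?_ ?_
      · intro v hv
        simp only [hA0, mem_filter, mem_univ, true_and] at hv ⊢
        obtain ⟨heq, hne⟩ := v.property
        constructor
        · have hD := (eq_iff_sq hp v.val.1 v.val.2.1 v.val.2.2).mp heq
          have hz : 2 * v.val.1 - v.val.2.1 * v.val.2.2 = 0 := by linear_combination hv
          rw [hz] at hD
          simp only [D] at hD
          linear_combination -hD
        · intro hcontra
          rw [Prod.ext_iff] at hcontra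
          apply triple_ne_zero hne
          have hy : v.val.2.1 = 0 := hcontra.1
          have hz : v.val.2.2 = 0 := hcontra.2
          refine ⟨?_, hy, hz⟩
          apply two_mul_eq_zero hp
          rw [hv, hy]
          ring
      · intro w hw
        exact mem_filter.mpr ⟨mem_univ _, by
          show 2 * (2⁻¹ * (w.1 * w.2)) = w.1 * w.2
          linear_combination (w.1 * w.2) * h2i⟩
      · intro v hv
        simp only [hA0, mem_filter, mem_univ, true_and] at hv
        apply Subtype.ext
        show (2⁻¹ * (v.val.2.1 * v.val.2.2), v.val.2.1, v.val.2.2) = v.val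
        refine Prod.ext ?_ rfl
        show 2⁻¹ * (v.val.2.1 * v.val.2.2) = v.val.1
        linear_combination (-2⁻¹ : ZMod p) * hv + v.val.1 * h2i
      · intro w hw
        rfl
    have hzero : ((0, 0) : ZMod p × ZMod p) ∈ (univ : Finset (ZMod p × ZMod p)).filter
        (fun w => (w.1 ^ 2 - 4) * (w.2 ^ 2 - 4) = 16) := by
      simp only [mem_filter, mem_univ, true_and]
      norm_num
    have herase : ((univ : Finset (ZMod p × ZMod p)).filter
        (fun w => (w.1 ^ 2 - 4) * (w.2 ^ 2 - 4) = 16 ∧ w ≠ (0, 0)))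
        = ((univ : Finset (ZMod p × ZMod p)).filter
            (fun w => (w.1 ^ 2 - 4) * (w.2 ^ 2 - 4) = 16)).erase (0, 0) := by
      ext w
      simp only [mem_filter, mem_univ, true_and, mem_erase]
      tauto
    have hle : 1 ≤ ((univ : Finset (ZMod p × ZMod p)).filter
        (fun w => (w.1 ^ 2 - 4) * (w.2 ^ 2 - 4) = 16)).card :=
      Finset.card_pos.mpr ⟨_, hzero⟩
    rw [hbij, herase, Finset.card_erase_of_mem hzero]
    push_cast [Nat.cast_sub hle]
    rw [cardW hp]
    ring
  -- card of A1 (y = 0)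
  have hcA1 : (A1.card : ℤ) = (p : ℤ) - 1 + ((p : ℤ) - 1) * χ (-1) := by
    have hbij : A1.card = ((univ : Finset (ZMod p × ZMod p)).filter
        (fun w => w.1 ^ 2 + w.2 ^ 2 = 0 ∧ w ≠ (0, 0))).card := by
      refine Finset.card_bij' (fun v _ => (v.val.1, v.val.2.2))
        (fun w hw => ⟨(w.1, 0, w.2), by
          simp only [mem_filter, mem_univ, true_and] at hw
          constructor
          · show w.1 ^ 2 + (0 : ZMod p) ^ 2 + w.2 ^ 2 = w.1 * 0 * w.2
            linear_combination hw.1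
          · intro hcontra
            apply hw.2
            rw [Prod.ext_iff, Prod.ext_iff] at hcontra
            rw [Prod.ext_iff]
            exact ⟨hcontra.1, hcontra.2.2⟩⟩) ?_ ?_ ?_ ?_
      · intro v hv
        simp only [hA1, mem_filter, mem_univ, true_and] at hv ⊢
        obtain ⟨heq, hne⟩ := v.property
        constructor
        · linear_combination heq + (v.val.1 * v.val.2.2 - v.val.2.1) * hv
        · intro hcontra
          rw [Prod.ext_iff] at hcontra
          exact triple_ne_zero hne ⟨hcontra.1, hv, hcontra.2⟩
      · intro w hw
        exact mem_filter.mpr ⟨mem_univ _, rfl⟩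
      · intro v hv
        simp only [hA1, mem_filter, mem_univ, true_and] at hv
        apply Subtype.ext
        show (v.val.1, 0, v.val.2.2) = v.val
        exact Prod.ext rfl (Prod.ext hv.symm rfl)
      · intro w hw
        rfl
    have hzero : ((0, 0) : ZMod p × ZMod p) ∈ (univ : Finset (ZMod p × ZMod p)).filter
        (fun w => w.1 ^ 2 + w.2 ^ 2 = 0) := by
      simp only [mem_filter, mem_univ, true_and]
      norm_num
    have herase : ((univ : Finset (ZMod p × ZMod p)).filter
        (fun w => w.1 ^ 2 + w.2 ^ 2 = 0 ∧ w ≠ (0, 0)))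
        = ((univ : Finset (ZMod p × ZMod p)).filter
            (fun w => w.1 ^ 2 + w.2 ^ 2 = 0)).erase (0, 0) := by
      ext w
      simp only [mem_filter, mem_univ, true_and, mem_erase]
      tauto
    have hle : 1 ≤ ((univ : Finset (ZMod p × ZMod p)).filter
        (fun w => w.1 ^ 2 + w.2 ^ 2 = 0)).card :=
      Finset.card_pos.mpr ⟨_, hzero⟩
    rw [hbij, herase, Finset.card_erase_of_mem hzero]
    push_cast [Nat.cast_sub hle]
    rw [cardV hp]
    ring
  -- card of A2 (z = 0)
  have hcA2 : (A2.card : ℤ) = (p : ℤ) - 1 + ((p : ℤ) - 1) * χ (-1) := by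
    have hbij : A2.card = ((univ : Finset (ZMod p × ZMod p)).filter
        (fun w => w.1 ^ 2 + w.2 ^ 2 = 0 ∧ w ≠ (0, 0))).card := by
      refine Finset.card_bij' (fun v _ => (v.val.1, v.val.2.1))
        (fun w hw => ⟨(w.1, w.2, 0), by
          simp only [mem_filter, mem_univ, true_and] at hw
          constructor
          · show w.1 ^ 2 + w.2 ^ 2 + (0 : ZMod p) ^ 2 = w.1 * w.2 * 0
            linear_combination hw.1
          · intro hcontra
            apply hw.2
            rw [Prod.ext_iff, Prod.ext_iff] at hcontra
            rw [Prod.ext_iff]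
            exact ⟨hcontra.1, hcontra.2.1⟩⟩) ?_ ?_ ?_ ?_
      · intro v hv
        simp only [hA2, mem_filter, mem_univ, true_and] at hv ⊢
        obtain ⟨heq, hne⟩ := v.property
        constructor
        · linear_combination heq + (v.val.1 * v.val.2.1 - v.val.2.2) * hv
        · intro hcontra
          rw [Prod.ext_iff] at hcontra
          exact triple_ne_zero hne ⟨hcontra.1, hcontra.2, hv⟩
      · intro w hw
        exact mem_filter.mpr ⟨mem_univ _, rfl⟩
      · intro v hv
        simp only [hA2, mem_filter, mem_univ, true_and] at hv
        apply Subtype.ext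
        show (v.val.1, v.val.2.1, 0) = v.val
        exact Prod.ext rfl (Prod.ext rfl hv.symm)
      · intro w hw
        rfl
    have hzero : ((0, 0) : ZMod p × ZMod p) ∈ (univ : Finset (ZMod p × ZMod p)).filter
        (fun w => w.1 ^ 2 + w.2 ^ 2 = 0) := by
      simp only [mem_filter, mem_univ, true_and]
      norm_num
    have herase : ((univ : Finset (ZMod p × ZMod p)).filter
        (fun w => w.1 ^ 2 + w.2 ^ 2 = 0 ∧ w ≠ (0, 0)))
        = ((univ : Finset (ZMod p × ZMod p)).filter
            (fun w => w.1 ^ 2 + w.2 ^ 2 = 0)).erase (0, 0) := by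
      ext w
      simp only [mem_filter, mem_univ, true_and, mem_erase]
      tauto
    have hle : 1 ≤ ((univ : Finset (ZMod p × ZMod p)).filter
        (fun w => w.1 ^ 2 + w.2 ^ 2 = 0)).card :=
      Finset.card_pos.mpr ⟨_, hzero⟩
    rw [hbij, herase, Finset.card_erase_of_mem hzero]
    push_cast [Nat.cast_sub hle]
    rw [cardV hp]
    ring
  rw [hunion, Finset.card_union_of_disjoint hdU, Finset.card_union_of_disjoint hd01]
  push_cast
  rw [hcA0, hcA1, hcA2]
  ring

/-- sign of an involution -/
lemma sign_of_involution {α : Type*} [Fintype α] [DecidableEq α] (σ : Equiv.Perm α)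
    (h : σ * σ = 1) : ∃ c : ℕ, σ.support.card = 2 * c ∧
      Equiv.Perm.sign σ = (-1 : ℤˣ) ^ c := by
  have horder : orderOf σ ∣ 2 := orderOf_dvd_of_pow_eq_one (by rw [pow_two]; exact h)
  have hall : ∀ n ∈ σ.cycleType, n = 2 := by
    intro n hn
    have hdvd : n ∣ 2 := by
      have := Multiset.dvd_lcm hn
      rw [Equiv.Perm.lcm_cycleType] at this
      exact this.trans horder
    exact le_antisymm (Nat.le_of_dvd (by norm_num) hdvd)
      (Equiv.Perm.two_le_of_mem_cycleType hn)
  refine ⟨Multiset.card σ.cycleType, ?_, ?_⟩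
  · rw [← Equiv.Perm.sum_cycleType]
    rw [Multiset.eq_replicate_of_mem hall, Multiset.sum_replicate, Multiset.card_replicate,
      smul_eq_mul]
    ring
  · rw [Equiv.Perm.sign_of_cycleType]
    have hsum : σ.cycleType.sum = 2 * Multiset.card σ.cycleType := by
      rw [Multiset.eq_replicate_of_mem hall, Multiset.sum_replicate, Multiset.card_replicate,
        smul_eq_mul]
      ring
    rw [hsum]
    rw [show 2 * Multiset.card σ.cycleType + Multiset.card σ.cycleType
      = 2 * Multiset.card σ.cycleType + Multiset.card σ.cycleType from rfl, pow_add, pow_mul]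
    norm_num

end MarkoffAux

/-- For an odd prime `p`, the Markoff move `m₁` induces a
permutation of the set `Y_{-2}(F_p)` of `N`-orbits on `X*_{-2}(F_p)`; this
permutation is even if and only if `p ≡ 3 (mod 8)`. -/
theorem m1_induced_perm_even_iff (p : ℕ) [Fact p.Prime] (hp : p ≠ 2) :
    ∃ σ : Equiv.Perm (YMinusTwo p), Induces p (markoffMove1 p) σ ∧
      (Equiv.Perm.sign σ = 1 ↔ p % 8 = 3) := by
  classical
  refine ⟨MarkoffAux.sigmaPerm p, ?_, ?_⟩
  · intro v w h
    have hw : w = MarkoffAux.mv v := Subtype.ext (by rw [h]; rfl)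
    rw [hw]
    rfl
  · obtain ⟨c, hc, hsign⟩ := MarkoffAux.sign_of_involution _ (MarkoffAux.sigmaPerm_sq (p := p))
    have hsupp : (MarkoffAux.sigmaPerm p).support
        = (Finset.univ : Finset (YMinusTwo p)).filter
            (fun t => ¬ MarkoffAux.sigmaPerm p t = t) := by
      ext t
      simp [Equiv.Perm.mem_support]
    have hsplit : ((Finset.univ : Finset (YMinusTwo p)).filter
          (fun t => MarkoffAux.sigmaPerm p t = t)).card
        + ((Finset.univ : Finset (YMinusTwo p)).filter
            (fun t => ¬ MarkoffAux.sigmaPerm p t = t)).card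
        = Fintype.card (YMinusTwo p) := by
      rw [← Finset.card_univ]
      exact Finset.card_filter_add_card_filter_not _
    have hM := MarkoffAux.card_M_eq (p := p) hp
    have hfix := MarkoffAux.card_fixM_eq (p := p) hp
    have hcsupp : (MarkoffAux.sigmaPerm p).support.card = 2 * c := hc
    rw [hsupp] at hcsupp
    have hnat : Fintype.card (MarkoffStar p)
        = ((Finset.univ : Finset (MarkoffStar p)).filter
            (fun v => MarkoffAux.FixCond v)).card + 4 * (2 * c) := by
      omega
    have hint : (Fintype.card (MarkoffStar p) : ℤ)
        = (((Finset.univ : Finset (MarkoffStar p)).filter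
            (fun v => MarkoffAux.FixCond v)).card : ℤ) + 8 * c := by
      rw [hnat]
      push_cast
      ring
    rw [MarkoffAux.card_M_val hp, MarkoffAux.card_fixM_val hp] at hint
    have hodd : p % 2 = 1 := (Nat.Prime.mod_two_eq_one_iff_ne_two Fact.out).mpr hp
    have hmod4 : p % 4 = 1 ∨ p % 4 = 3 := by omega
    have h84 : p % 8 % 4 = p % 4 := Nat.mod_mod_of_dvd p (by norm_num)
    rcases hmod4 with h4 | h4
    · -- p ≡ 1 mod 4 : permutation is odd, and p % 8 ≠ 3
      have hchi : quadraticChar (ZMod p) (-1) = 1 := by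
        rw [quadraticChar_one_iff_isSquare (neg_ne_zero.mpr one_ne_zero)]
        exact (ZMod.exists_sq_eq_neg_one_iff).mpr (by omega)
      rw [hchi] at hint
      set k := p / 4 with hk
      have hpkn : p = 4 * k + 1 := by omega
      have hpk : (p : ℤ) = 4 * (k : ℤ) + 1 := by exact_mod_cast hpkn
      rw [hpk] at hint
      have h8 : (8 : ℤ) * c = 16 * (k : ℤ) ^ 2 + 8 := by linear_combination -hint
      have hcz : (c : ℤ) = 2 * (k : ℤ) ^ 2 + 1 := by linarith
      have hcn : c = 2 * k ^ 2 + 1 := by exact_mod_cast hcz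
      have hoddc : Odd c := ⟨k ^ 2, by omega⟩
      rw [hsign, Odd.neg_one_pow hoddc]
      constructor
      · intro hone
        exact absurd hone (by decide)
      · intro h8m
        omega
    · -- p ≡ 3 mod 4
      have hchi : quadraticChar (ZMod p) (-1) = -1 := by
        rw [quadraticChar_neg_one_iff_not_isSquare]
        intro hsq
        exact (ZMod.exists_sq_eq_neg_one_iff.mp hsq) h4
      rw [hchi] at hint
      set k := p / 4 with hk
      have hpkn : p = 4 * k + 3 := by omega
      have hpk : (p : ℤ) = 4 * (k : ℤ) + 3 := by exact_mod_cast hpkn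
      rw [hpk] at hint
      have h8 : (8 : ℤ) * c = 16 * (k : ℤ) ^ 2 + 8 * k := by linear_combination -hint
      have hcz : (c : ℤ) = 2 * (k : ℤ) ^ 2 + k := by linarith
      have hcn : c = 2 * k ^ 2 + k := by exact_mod_cast hcz
      rcases Nat.even_or_odd k with hkeven | hkodd
      · have hevc : Even c := by
          obtain ⟨m, hm⟩ := hkeven
          refine ⟨k ^ 2 + m, by omega⟩
        have h83 : p % 8 = 3 := by
          obtain ⟨m, hm⟩ := hkeven
          omega
        rw [hsign, Even.neg_one_pow hevc]
        exact ⟨fun _ => h83, fun _ => rfl⟩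
      · have hoddc : Odd c := by
          obtain ⟨m, hm⟩ := hkodd
          refine ⟨k ^ 2 + m, by omega⟩
        have h87 : p % 8 = 7 := by
          obtain ⟨m, hm⟩ := hkodd
          omega
        rw [hsign, Odd.neg_one_pow hoddc]
        constructor
        · intro hone
          exact absurd hone (by decide)
        · intro h8m
          omega
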